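/- (Average drift lower bound) Let Q be a nonnegative square matrix with ρ(Q) < 1, q₀ a nonnegative nonzero vector, qₜᵀ = q₀ᵀQᵗ, and d a nonnegative vector. If for every t ≥ 0 the condition qₜᵀ(I−Q)d ≤ ‖qₜ‖₁ holds, then q₀ᵀ·h ≥ q₀ᵀ·d, where h = (I−Q)⁻¹·1. -/

import Mathlib

open Matrix Filter Finset
open scoped ENNReal NNReal Topology

noncomputable def specRad {n : ℕ} (Q : Matrix (Fin n) (Fin n) ℝ) : ℝ≥0∞ :=
  spectralRadius ℂ (Q.map (Complex.ofReal))

noncomputable def vnorm1 {n : ℕ} (v : Fin n → ℝ) : ℝ := ∑ i, |v i|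

noncomputable def matNorm1 {n : ℕ} (A : Matrix (Fin n) (Fin n) ℝ) : ℝ := ⨆ j, ∑ i, |A i j|

section auxSpec

attribute [local instance] Matrix.frobeniusSeminormedAddCommGroup
  Matrix.frobeniusNormedAddCommGroup Matrix.frobeniusNormedRing Matrix.frobeniusNormedAlgebra

lemma aux_entry_le_frobenius {n : ℕ} (B : Matrix (Fin n) (Fin n) ℂ) (i j : Fin n) :
    ‖B i j‖ ≤ ‖B‖ := by
  rw [Matrix.frobenius_norm_def]
  have h1 : ‖B i j‖ ^ (2:ℝ) ≤ ∑ i', ∑ j', ‖B i' j'‖ ^ (2:ℝ) := by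
    have t1 : ‖B i j‖ ^ (2:ℝ) ≤ ∑ j', ‖B i j'‖ ^ (2:ℝ) :=
      Finset.single_le_sum (f := fun j' => ‖B i j'‖ ^ (2:ℝ))
        (fun j' _ => by positivity) (Finset.mem_univ j)
    have t2 : ∑ j', ‖B i j'‖ ^ (2:ℝ) ≤ ∑ i', ∑ j', ‖B i' j'‖ ^ (2:ℝ) :=
      Finset.single_le_sum (f := fun i' => ∑ j', ‖B i' j'‖ ^ (2:ℝ))
        (fun i' _ => Finset.sum_nonneg fun j' _ => by positivity) (Finset.mem_univ i)
    exact t1.trans t2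
  have key : (‖B i j‖ ^ (2:ℝ)) ^ ((1:ℝ)/2) = ‖B i j‖ := by
    rw [← Real.rpow_mul (norm_nonneg _)]
    norm_num
  calc ‖B i j‖ = (‖B i j‖ ^ (2:ℝ)) ^ ((1:ℝ)/2) := key.symm
    _ ≤ (∑ i', ∑ j', ‖B i' j'‖ ^ (2:ℝ)) ^ ((1:ℝ)/2) :=
        Real.rpow_le_rpow (by positivity) h1 (by norm_num)

set_option maxHeartbeats 1600000 in
lemma aux_pow_bound {n : ℕ} (Q : Matrix (Fin n) (Fin n) ℝ) (hρ : specRad Q < 1) :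
    ∃ r : ℝ, 0 ≤ r ∧ r < 1 ∧ ∀ᶠ k in atTop, ∀ i j, |(Q ^ k) i j| ≤ r ^ k := by
  obtain ⟨r, hr1, hr2⟩ := ENNReal.lt_iff_exists_nnreal_btwn.mp hρ
  set A : Matrix (Fin n) (Fin n) ℂ := Q.map Complex.ofReal with hA
  haveI : CompleteSpace (Matrix (Fin n) (Fin n) ℂ) := FiniteDimensional.complete ℂ _
  have hgel := spectrum.pow_nnnorm_pow_one_div_tendsto_nhds_spectralRadius A
  have hev : ∀ᶠ k : ℕ in atTop, (‖A ^ k‖₊ : ℝ≥0∞) ^ (1 / (k:ℝ)) < (r : ℝ≥0∞) :=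
    hgel.eventually_lt_const hr1
  refine ⟨r, r.coe_nonneg, by exact_mod_cast hr2, ?_⟩
  filter_upwards [hev, Filter.eventually_ge_atTop 1] with k hk hk1 i j
  have hkne : ((k:ℝ)) ≠ 0 := by
    have : (0:ℝ) < (k:ℝ) := by exact_mod_cast hk1
    linarith
  have hx : ((‖A ^ k‖₊ : ℝ≥0∞) ^ (1/(k:ℝ))) ^ (k:ℝ) = (‖A ^ k‖₊ : ℝ≥0∞) := by
    rw [← ENNReal.rpow_mul, one_div_mul_cancel hkne, ENNReal.rpow_one]
  have h1 : (‖A ^ k‖₊ : ℝ≥0∞) ≤ (r:ℝ≥0∞) ^ (k:ℝ) := by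
    rw [← hx]
    exact ENNReal.rpow_le_rpow hk.le (Nat.cast_nonneg k)
  have h2 : ‖A ^ k‖ ≤ (r:ℝ) ^ k := by
    rw [ENNReal.rpow_natCast, ← ENNReal.coe_pow, ENNReal.coe_le_coe] at h1
    calc ‖A ^ k‖ = ((‖A ^ k‖₊ : ℝ≥0) : ℝ) := rfl
      _ ≤ ((r ^ k : ℝ≥0) : ℝ) := by exact_mod_cast h1
      _ = (r:ℝ) ^ k := by push_cast; ring
  have hmap : ∀ m : ℕ, A ^ m = (Q ^ m).map Complex.ofReal := by
    intro m
    induction m with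
    | zero =>
      ext i j
      by_cases hij : i = j <;> simp [Matrix.one_apply, hij, Matrix.map_apply]
    | succ m ih =>
      rw [pow_succ, pow_succ, ih]
      ext i j
      simp [Matrix.mul_apply, Matrix.map_apply, hA]
  have h3 : ‖(A ^ k) i j‖ ≤ ‖A ^ k‖ := aux_entry_le_frobenius _ i j
  rw [hmap k] at h3 h2
  simpa [Matrix.map_apply, Complex.norm_real, Real.norm_eq_abs] using h3.trans h2

lemma aux_isUnit_det {n : ℕ} (Q : Matrix (Fin n) (Fin n) ℝ) (hρ : specRad Q < 1) :
    IsUnit (1 - Q).det := by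
  set A : Matrix (Fin n) (Fin n) ℂ := Q.map Complex.ofReal with hA
  have h1 : (1:ℂ) ∈ resolventSet ℂ A := by
    apply spectrum.mem_resolventSet_of_spectralRadius_lt
    simpa [specRad, hA] using hρ
  have h2 : IsUnit ((1 : Matrix (Fin n) (Fin n) ℂ) - A) := by
    have := spectrum.mem_resolventSet_iff.mp h1
    simpa using this
  have hmap : (1 : Matrix (Fin n) (Fin n) ℂ) - A = (1 - Q).map Complex.ofReal := by
    ext i j
    by_cases hij : i = j <;>
      simp [hA, Matrix.map_apply, Matrix.sub_apply, Matrix.one_apply, hij]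
  rw [hmap] at h2
  have h3 := (Matrix.isUnit_iff_isUnit_det _).mp h2
  have hdeteq : ((1 - Q).map Complex.ofReal).det = (((1 - Q).det : ℝ) : ℂ) := by
    have := RingHom.map_det Complex.ofRealHom (1 - Q)
    exact this.symm
  rw [hdeteq] at h3
  have h4 : ((1 - Q).det : ℂ) ≠ 0 := by
    simpa [isUnit_iff_ne_zero] using h3
  have h5 : (1 - Q).det ≠ 0 := by
    intro h; apply h4; rw [h]; simp
  exact isUnit_iff_ne_zero.mpr h5

end auxSpec

theorem stmt_12 {n : ℕ} (Q : Matrix (Fin n) (Fin n) ℝ)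
    (hQ : ∀ i j, 0 ≤ Q i j) (hρ : specRad Q < 1)
    (q0 : Fin n → ℝ) (hq0 : ∀ i, 0 ≤ q0 i) (hq0ne : q0 ≠ 0)
    (d : Fin n → ℝ) (hd : ∀ i, 0 ≤ d i)
    (hdrift : ∀ t : ℕ,
      dotProduct (Matrix.vecMul q0 (Q ^ t)) ((1 - Q).mulVec d) ≤
        vnorm1 (Matrix.vecMul q0 (Q ^ t))) :
    dotProduct q0 d ≤ dotProduct q0 (((1 - Q)⁻¹).mulVec (fun _ => 1)) := by
  classical
  obtain ⟨r, hr0, hr1, hev⟩ := aux_pow_bound Q hρ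
  have hdet : IsUnit (1 - Q).det := aux_isUnit_det Q hρ
  set h : Fin n → ℝ := ((1 - Q)⁻¹).mulVec (fun _ => 1) with hh
  have hinv : (1 - Q).mulVec h = (fun _ => 1) := by
    rw [hh, Matrix.mulVec_mulVec, Matrix.mul_nonsing_inv _ hdet, Matrix.one_mulVec]
  set g : (Fin n → ℝ) → ℕ → ℝ := fun v t => Matrix.vecMul q0 (Q ^ t) ⬝ᵥ v with hg
  -- the drift expression telescopes
  have hstep : ∀ (v : Fin n → ℝ) (t : ℕ),
      Matrix.vecMul q0 (Q ^ t) ⬝ᵥ ((1 - Q).mulVec v) = g v t - g v (t + 1) := by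
    intro v t
    rw [dotProduct_mulVec, Matrix.vecMul_vecMul]
    have hQe : Q ^ t * (1 - Q) = Q ^ t - Q ^ (t + 1) := by
      rw [mul_sub, mul_one, pow_succ]
    rw [hQe, Matrix.vecMul_sub, sub_dotProduct, hg]
  -- nonnegativity of entries of Q ^ t
  have hQt : ∀ (t : ℕ) (i j : Fin n), 0 ≤ (Q ^ t) i j := by
    intro t
    induction t with
    | zero =>
      intro i j
      rw [pow_zero]
      by_cases hij : i = j <;> simp [Matrix.one_apply, hij]
    | succ t ih =>
      intro i j
      rw [pow_succ, Matrix.mul_apply]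
      exact Finset.sum_nonneg fun k _ => mul_nonneg (ih i k) (hQ k j)
  have hqt : ∀ (t : ℕ) (i : Fin n), 0 ≤ Matrix.vecMul q0 (Q ^ t) i := by
    intro t i
    simp only [Matrix.vecMul, dotProduct]
    exact Finset.sum_nonneg fun j _ => mul_nonneg (hq0 j) (hQt t j i)
  have hvn : ∀ t : ℕ, vnorm1 (Matrix.vecMul q0 (Q ^ t)) = g (fun _ => 1) t := by
    intro t
    simp only [hg, vnorm1, dotProduct]
    exact Finset.sum_congr rfl fun i _ => by rw [abs_of_nonneg (hqt t i), mul_one]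
  -- g v T tends to 0
  have hzero : ∀ v : Fin n → ℝ, Tendsto (g v) atTop (𝓝 0) := by
    intro v
    set C1 : ℝ := ∑ j, |q0 j| with hC1
    set C2 : ℝ := ∑ i, |v i| with hC2
    have hC1n : 0 ≤ C1 := Finset.sum_nonneg fun j _ => abs_nonneg _
    have hb : ∀ᶠ T in atTop, ‖g v T‖ ≤ C1 * r ^ T * C2 := by
      filter_upwards [hev] with T hT
      have hterm : ∀ i : Fin n, |Matrix.vecMul q0 (Q ^ T) i| ≤ C1 * r ^ T := by
        intro i
        simp only [Matrix.vecMul, dotProduct]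
        calc |∑ j, q0 j * (Q ^ T) j i| ≤ ∑ j, |q0 j * (Q ^ T) j i| :=
              Finset.abs_sum_le_sum_abs _ _
          _ ≤ ∑ j, |q0 j| * r ^ T := by
              refine Finset.sum_le_sum fun j _ => ?_
              rw [abs_mul]
              exact mul_le_mul_of_nonneg_left (hT j i) (abs_nonneg _)
          _ = C1 * r ^ T := by rw [hC1, Finset.sum_mul]
      calc ‖g v T‖ = |∑ i, Matrix.vecMul q0 (Q ^ T) i * v i| := by
            simp only [hg, Real.norm_eq_abs, dotProduct]
        _ ≤ ∑ i, |Matrix.vecMul q0 (Q ^ T) i * v i| := Finset.abs_sum_le_sum_abs _ _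
        _ ≤ ∑ i, (C1 * r ^ T) * |v i| := by
            refine Finset.sum_le_sum fun i _ => ?_
            rw [abs_mul]
            exact mul_le_mul_of_nonneg_right (hterm i) (abs_nonneg _)
        _ = C1 * r ^ T * C2 := by rw [hC2, Finset.mul_sum]
    have htend : Tendsto (fun T : ℕ => C1 * r ^ T * C2) atTop (𝓝 0) := by
      have := ((tendsto_pow_atTop_nhds_zero_of_lt_one hr0 hr1).const_mul C1).mul_const C2
      simpa using this
    exact squeeze_zero_norm' hb htend
  -- telescoping sums
  have hsum1 : ∀ T : ℕ, ∑ t ∈ Finset.range T, g (fun _ => 1) t = g h 0 - g h T := by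
    intro T
    have heach : ∀ t : ℕ, g (fun _ => 1) t = g h t - g h (t + 1) := by
      intro t
      rw [← hstep h t, hinv, hg]
    rw [Finset.sum_congr rfl fun t _ => heach t]
    exact Finset.sum_range_sub' (g h) T
  have hsum2 : ∀ T : ℕ, ∑ t ∈ Finset.range T, (g d t - g d (t + 1)) = g d 0 - g d T :=
    fun T => Finset.sum_range_sub' (g d) T
  -- main inequality for each T
  have hmain : ∀ T : ℕ, g d 0 ≤ g h 0 - g h T + g d T := by
    intro T
    have h1 : g d 0 - g d T ≤ ∑ t ∈ Finset.range T, g (fun _ => 1) t := by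
      rw [← hsum2 T]
      refine Finset.sum_le_sum fun t _ => ?_
      rw [← hstep d t]
      calc Matrix.vecMul q0 (Q ^ t) ⬝ᵥ ((1 - Q).mulVec d)
          ≤ vnorm1 (Matrix.vecMul q0 (Q ^ t)) := hdrift t
        _ = g (fun _ => 1) t := hvn t
    rw [hsum1 T] at h1
    linarith
  -- take limits
  have htends : Tendsto (fun T : ℕ => g h 0 - g h T + g d T) atTop (𝓝 (g h 0)) := by
    have hc : Tendsto (fun _ : ℕ => g h 0) atTop (𝓝 (g h 0)) := tendsto_const_nhds
    have := (hc.sub (hzero h)).add (hzero d)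
    simpa using this
  have hfinal : g d 0 ≤ g h 0 := ge_of_tendsto' htends hmain
  have hgd0 : g d 0 = dotProduct q0 d := by
    simp only [hg, pow_zero, Matrix.vecMul_one]
  have hgh0 : g h 0 = dotProduct q0 h := by
    simp only [hg, pow_zero, Matrix.vecMul_one]
  rw [hgd0, hgh0] at hfinal
  exact hfinal
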